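/- Second-order accuracy of the second family of adaptive rational weights: let α ≥ 0 and let f be twice continuously differentiable on a compact interval I ⊆ ℝ. There exist constants M > 0 and h₀ > 0 such that for every 0 < h < h₀, every x₀ ∈ ℝ, and every integer j with [x_{j−2}, x_{j+1}] ⊆ I, one has |ω_{2,0}·f(x_{j−1}) + ω_{2,1}·f(x_j) − f(x_{j-1/2})| ≤ M·h², where, with D = 2 + α·Σ_{s=0}^{1}((f(x_{j−1}) − f(x_{j+1−3s}))² + (f(x_j) − f(x_{j+1−3s}))²), ω_{2,0} = (1 + α·((f(x_{j−1}) − f(x_{j+1}))² + (f(x_j) − f(x_{j+1}))²))/D and ω_{2,1} = (1 + α·((f(x_{j−1}) − f(x_{j−2}))² + (f(x_j) − f(x_{j−2}))²))/D. -/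

import Mathlib

/-- The node `x_m = x₀ + m·h`. -/
noncomputable def nd (h x₀ : ℝ) (m : ℤ) : ℝ := x₀ + (m : ℝ) * h

/-- The common denominator
`D = 2 + α·Σ_{s=0}^{1}((f(x_{j-1}) − f(x_{j+1-3s}))² + (f(x_j) − f(x_{j+1-3s}))²)`. -/
noncomputable def D2 (α h x₀ : ℝ) (j : ℤ) (f : ℝ → ℝ) : ℝ :=
  2 + α * ∑ s ∈ Finset.range 2,
    ((f (nd h x₀ (j - 1)) - f (nd h x₀ (j + 1 - 3 * (s : ℤ)))) ^ 2 +
      (f (nd h x₀ j) - f (nd h x₀ (j + 1 - 3 * (s : ℤ)))) ^ 2)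

open Set NNReal

/-! The two weights are `N₀ / (N₀ + N₁)` and `N₁ / (N₀ + N₁)` with `N₀, N₁ ≥ 1`
(`weightNum` below), so the error splits as
`(f(x_{j-1}) + f(x_j) - 2 f(x_{j-1/2})) / 2 + (ω_{2,0} - ω_{2,1}) / 2 · (f(x_{j-1}) - f(x_j))`.
The first term is the midpoint error, `O(h²)` because `f'` is Lipschitz on the compact interval.
In the second, `N₀ - N₁` is `α` times a difference of squared increments of the Lipschitz
function `f` over distances `≤ 2h`, so `ω_{2,0} - ω_{2,1} = O(h²)`, while
`f(x_{j-1}) - f(x_j) = O(h)`; this term is `O(h³)`. -/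

theorem norm_add_sub_two_smul_midpoint_le {E : Type*} [NormedAddCommGroup E] [NormedSpace ℝ E]
    {f f' : ℝ → E} {K : ℝ≥0} {a b : ℝ} (hab : a ≤ b)
    (hf : ∀ x ∈ Icc a b, HasDerivWithinAt f (f' x) (Icc a b) x)
    (hf' : LipschitzOnWith K f' (Icc a b)) :
    ‖f a + f b - (2 : ℝ) • f ((a + b) / 2)‖ ≤ K * (b - a) ^ 2 / 2 := by
  set m := (a + b) / 2 with hm_def
  have hm : m ∈ Icc a b := ⟨by linarith, by linarith⟩
  have ham : a - m = -((b - a) / 2) := by ring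
  have hbm : b - m = (b - a) / 2 := by ring
  -- Subtracting the tangent line at the midpoint leaves a function with derivative `O(b - a)`.
  set g : ℝ → E := fun x => f x - (x - m) • f' m
  have hg : ∀ x ∈ Icc a b, HasDerivWithinAt g (f' x - f' m) (Icc a b) x := fun x hx => by
    simpa using (hf x hx).fun_sub (((hasDerivWithinAt_id x _).sub_const m).smul_const (f' m))
  have hg' : ∀ x ∈ Icc a b, ‖f' x - f' m‖ ≤ K * ((b - a) / 2) := fun x hx =>
    calc ‖f' x - f' m‖ = dist (f' x) (f' m) := (dist_eq_norm _ _).symm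
      _ ≤ K * dist x m := hf'.dist_le_mul x hx m hm
      _ ≤ K * ((b - a) / 2) := by
        gcongr
        rw [Real.dist_eq, abs_le]
        constructor <;> linarith [hx.1, hx.2]
  have hga := (convex_Icc a b).norm_image_sub_le_of_norm_hasDerivWithin_le hg hg' hm
    (left_mem_Icc.2 hab)
  have hgb := (convex_Icc a b).norm_image_sub_le_of_norm_hasDerivWithin_le hg hg' hm
    (right_mem_Icc.2 hab)
  rw [Real.norm_eq_abs, ham, abs_neg, abs_of_nonneg (by linarith)] at hga
  rw [Real.norm_eq_abs, hbm, abs_of_nonneg (by linarith)] at hgb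
  have hsplit : f a + f b - (2 : ℝ) • f m = (g a - g m) + (g b - g m) := by
    simp only [g, sub_self, zero_smul, sub_zero, ham, hbm, neg_smul, two_smul]
    abel
  calc ‖f a + f b - (2 : ℝ) • f m‖ ≤ ‖g a - g m‖ + ‖g b - g m‖ := hsplit ▸ norm_add_le _ _
    _ ≤ K * ((b - a) / 2) * ((b - a) / 2) + K * ((b - a) / 2) * ((b - a) / 2) :=
      add_le_add hga hgb
    _ = K * (b - a) ^ 2 / 2 := by ring

theorem ContDiffOn.exists_lipschitzOnWith_and_derivWithin {F : Type*} [NormedAddCommGroup F]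
    [NormedSpace ℝ F] {s : Set ℝ} {f : ℝ → F} (hf : ContDiffOn ℝ 2 f s) (hs : Convex ℝ s)
    (hs' : IsCompact s) (hu : UniqueDiffOn ℝ s) :
    ∃ L K : ℝ≥0, LipschitzOnWith L f s ∧ LipschitzOnWith K (derivWithin f s) s := by
  obtain ⟨L, hL⟩ := hf.exists_lipschitzOnWith two_ne_zero hs hs'
  obtain ⟨K, hK⟩ :=
    (hf.derivWithin hu (m := 1) (by norm_num)).exists_lipschitzOnWith one_ne_zero hs hs'
  exact ⟨L, K, hL, hK⟩

theorem abs_mul_add_mul_sub_le {w₀ w₁ u v w : ℝ} (hw : w₀ + w₁ = 1) :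
    |w₀ * u + w₁ * v - w| ≤ |u + v - 2 * w| / 2 + |w₀ - w₁| / 2 * |u - v| := by
  have hsplit : w₀ * u + w₁ * v - w = (u + v - 2 * w) / 2 + (w₀ - w₁) / 2 * (u - v) := by
    linear_combination (u + v) / 2 * hw
  rw [hsplit]
  refine (abs_add_le _ _).trans_eq ?_
  rw [abs_div, abs_mul, abs_div, abs_two]

theorem abs_div_add_sub_div_add_le {x y : ℝ} (hx : 1 ≤ x) (hy : 1 ≤ y) :
    |x / (x + y) - y / (x + y)| ≤ |x - y| / 2 := by
  rw [div_sub_div_same, abs_div, abs_of_pos (show 0 < x + y by linarith)]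
  exact div_le_div_of_nonneg_left (abs_nonneg _) two_pos (by linarith)

noncomputable def weightNum (α u v r : ℝ) : ℝ := 1 + α * ((u - r) ^ 2 + (v - r) ^ 2)

theorem one_le_weightNum {α : ℝ} (hα : 0 ≤ α) (u v r : ℝ) : 1 ≤ weightNum α u v r := by
  unfold weightNum
  have : 0 ≤ α * ((u - r) ^ 2 + (v - r) ^ 2) := by positivity
  linarith

theorem abs_weightNum_sub_weightNum_le {α u v r r' δ : ℝ} (hα : 0 ≤ α) (hur : |u - r| ≤ δ)
    (hvr : |v - r| ≤ δ) (hur' : |u - r'| ≤ δ) (hvr' : |v - r'| ≤ δ) :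
    |weightNum α u v r - weightNum α u v r'| ≤ 2 * α * δ ^ 2 := by
  have hlo : ∀ x, 0 ≤ α * x ^ 2 := fun x => by positivity
  have hhi : ∀ x, |x| ≤ δ → α * x ^ 2 ≤ α * δ ^ 2 := fun x hx =>
    mul_le_mul_of_nonneg_left (sq_abs x ▸ pow_le_pow_left₀ (abs_nonneg x) hx 2) hα
  rw [weightNum, weightNum, abs_le]
  constructor <;> linarith [hlo (u - r), hlo (v - r), hlo (u - r'), hlo (v - r'),
    hhi _ hur, hhi _ hvr, hhi _ hur', hhi _ hvr']

theorem abs_weighted_sub_midpoint_le {f f' : ℝ → ℝ} {s : Set ℝ} {L K : ℝ≥0} {α a h : ℝ}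
    (hα : 0 ≤ α) (hh : 0 < h) (hs : Icc (a - h) (a + 2 * h) ⊆ s)
    (hf : ∀ x ∈ s, HasDerivWithinAt f (f' x) s x) (hfL : LipschitzOnWith L f s)
    (hf'K : LipschitzOnWith K f' s) :
    |weightNum α (f a) (f (a + h)) (f (a + 2 * h)) /
          (weightNum α (f a) (f (a + h)) (f (a + 2 * h)) +
            weightNum α (f a) (f (a + h)) (f (a - h))) * f a +
        weightNum α (f a) (f (a + h)) (f (a - h)) /
          (weightNum α (f a) (f (a + h)) (f (a + 2 * h)) +
            weightNum α (f a) (f (a + h)) (f (a - h))) * f (a + h) -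
        f (a + h / 2)| ≤ K * h ^ 2 / 4 + 2 * α * L ^ 3 * h ^ 3 := by
  set N₀ := weightNum α (f a) (f (a + h)) (f (a + 2 * h))
  set N₁ := weightNum α (f a) (f (a + h)) (f (a - h))
  have hq : a - h ∈ s := hs ⟨le_rfl, by linarith⟩
  have ha : a ∈ s := hs ⟨by linarith, by linarith⟩
  have hb : a + h ∈ s := hs ⟨by linarith, by linarith⟩
  have hp : a + 2 * h ∈ s := hs ⟨by linarith, le_rfl⟩
  have hL : ∀ x ∈ s, ∀ y ∈ s, ∀ δ, |x - y| ≤ δ → |f x - f y| ≤ L * δ :=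
    fun x hx y hy δ hxy => by
      simpa only [Real.dist_eq] using
        (hfL.dist_le_mul x hx y hy).trans (by rw [Real.dist_eq]; gcongr)
  have hN : |N₀ - N₁| ≤ 2 * α * (L * (2 * h)) ^ 2 :=
    abs_weightNum_sub_weightNum_le hα
      (hL _ ha _ hp _ (abs_le.2 ⟨by linarith, by linarith⟩))
      (hL _ hb _ hp _ (abs_le.2 ⟨by linarith, by linarith⟩))
      (hL _ ha _ hq _ (abs_le.2 ⟨by linarith, by linarith⟩))
      (hL _ hb _ hq _ (abs_le.2 ⟨by linarith, by linarith⟩))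
  have hN₀ := one_le_weightNum hα (f a) (f (a + h)) (f (a + 2 * h))
  have hN₁ := one_le_weightNum hα (f a) (f (a + h)) (f (a - h))
  have hmid : |f a + f (a + h) - 2 * f (a + h / 2)| ≤ K * h ^ 2 / 2 := by
    have hsub : Icc a (a + h) ⊆ s := (Icc_subset_Icc (by linarith) (by linarith)).trans hs
    have := norm_add_sub_two_smul_midpoint_le (by linarith : a ≤ a + h)
      (fun x hx => (hf x (hsub hx)).mono hsub) (hf'K.mono hsub)
    rwa [Real.norm_eq_abs, smul_eq_mul, show (a + (a + h)) / 2 = a + h / 2 by ring,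
      add_sub_cancel_left] at this
  have hab : |f a - f (a + h)| ≤ L * h := hL _ ha _ hb _ (abs_le.2 ⟨by linarith, by linarith⟩)
  have hw : N₀ / (N₀ + N₁) + N₁ / (N₀ + N₁) = 1 := by
    rw [← add_div, div_self (by linarith)]
  calc _ ≤ |f a + f (a + h) - 2 * f (a + h / 2)| / 2 +
        |N₀ / (N₀ + N₁) - N₁ / (N₀ + N₁)| / 2 * |f a - f (a + h)| := abs_mul_add_mul_sub_le hw
    _ ≤ K * h ^ 2 / 2 / 2 + 2 * α * (L * (2 * h)) ^ 2 / 2 / 2 * (L * h) := by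
      gcongr
      exact (abs_div_add_sub_div_add_le hN₀ hN₁).trans (by gcongr)
    _ = K * h ^ 2 / 4 + 2 * α * L ^ 3 * h ^ 3 := by ring

theorem D2_eq_add (α h x₀ : ℝ) (j : ℤ) (f : ℝ → ℝ) :
    D2 α h x₀ j f =
      weightNum α (f (nd h x₀ (j - 1))) (f (nd h x₀ j)) (f (nd h x₀ (j + 1))) +
        weightNum α (f (nd h x₀ (j - 1))) (f (nd h x₀ j)) (f (nd h x₀ (j - 2))) := by
  have h₀ : j + 1 - 3 * ((0 : ℕ) : ℤ) = j + 1 := by push_cast; ring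
  have h₁ : j + 1 - 3 * ((1 : ℕ) : ℤ) = j - 2 := by push_cast; ring
  rw [D2, Finset.sum_range_succ, Finset.sum_range_one, h₀, h₁, weightNum, weightNum]
  ring

/-- Second-order accuracy of the second family of adaptive rational weights `ω_{2,0}, ω_{2,1}`. -/
theorem rational_weights_second_family_order_two (α : ℝ) (hα : 0 ≤ α) (A B : ℝ) (f : ℝ → ℝ)
    (hf : ContDiffOn ℝ 2 f (Set.Icc A B)) :
    ∃ M > 0, ∃ h₀ > 0, ∀ h : ℝ, 0 < h → h < h₀ → ∀ x₀ : ℝ, ∀ j : ℤ,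
      Set.Icc (nd h x₀ (j - 2)) (nd h x₀ (j + 1)) ⊆ Set.Icc A B →
      |((1 + α * ((f (nd h x₀ (j - 1)) - f (nd h x₀ (j + 1))) ^ 2 +
            (f (nd h x₀ j) - f (nd h x₀ (j + 1))) ^ 2)) / D2 α h x₀ j f) * f (nd h x₀ (j - 1)) +
          ((1 + α * ((f (nd h x₀ (j - 1)) - f (nd h x₀ (j - 2))) ^ 2 +
            (f (nd h x₀ j) - f (nd h x₀ (j - 2))) ^ 2)) / D2 α h x₀ j f) * f (nd h x₀ j) -
          f (x₀ + ((j : ℝ) - 1 / 2) * h)| ≤ M * h ^ 2 := by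
  rcases le_or_gt B A with hBA | hAB
  · refine ⟨1, one_pos, 1, one_pos, fun h hh _ x₀ j hsub => absurd ?_ hBA.not_gt⟩
    have hlt : nd h x₀ (j - 2) < nd h x₀ (j + 1) := by simp only [nd]; push_cast; nlinarith
    obtain ⟨hA, hB⟩ := (Icc_subset_Icc_iff hlt.le).1 hsub
    linarith
  obtain ⟨L, K, hL, hK⟩ :=
    hf.exists_lipschitzOnWith_and_derivWithin (convex_Icc A B) isCompact_Icc (uniqueDiffOn_Icc hAB)
  have hderiv : ∀ x ∈ Icc A B, HasDerivWithinAt f (derivWithin f (Icc A B) x) (Icc A B) x :=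
    fun x hx => (hf.differentiableOn two_ne_zero x hx).hasDerivWithinAt
  refine ⟨K / 4 + 2 * α * L ^ 3 + 1, by positivity, 1, one_pos, fun h hh hh₁ x₀ j hsub => ?_⟩
  set a := nd h x₀ (j - 1)
  have hb : nd h x₀ j = a + h := by simp only [a, nd]; push_cast; ring
  have hp : nd h x₀ (j + 1) = a + 2 * h := by simp only [a, nd]; push_cast; ring
  have hq : nd h x₀ (j - 2) = a - h := by simp only [a, nd]; push_cast; ring
  have hm : x₀ + ((j : ℝ) - 1 / 2) * h = a + h / 2 := by simp only [a, nd]; push_cast; ring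
  rw [hq, hp] at hsub
  rw [D2_eq_add, hb, hp, hq, hm]
  refine (abs_weighted_sub_midpoint_le hα hh hsub hderiv hL hK).trans ?_
  have hh₃ : h ^ 3 ≤ h ^ 2 := pow_le_pow_of_le_one hh.le hh₁.le (by norm_num)
  nlinarith [mul_le_mul_of_nonneg_left hh₃ (by positivity : (0 : ℝ) ≤ 2 * α * L ^ 3), sq_nonneg h]
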